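/- arXiv:2602.11922 — 3 statements merged into one kernel-verified Lean document; each statement's English description precedes it below -/
import Mathlib

section
/- There exist positive definite 2×2 complex matrices A, B, C such that d_{1/2}(A, B) > d_{1/2}(A, C) + d_{1/2}(C, B). Hence the triangle inequality for d_p fails already for p = 1/2. -/
open scoped ComplexOrder

/-- Real power of a square complex matrix, taken via the continuous functional calculus
(on the spectrum, which lies in `[0, ∞)` for positive semidefinite matrices). -/
noncomputable def Matrix.rpowCFC {n : Type*} [Fintype n] [DecidableEq n]
    (A : Matrix n n ℂ) (r : ℝ) : Matrix n n ℂ :=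
  cfc (fun x : ℝ => x ^ r) A

/-- The operation `A κₚ B := (A^{p/4} B^{p/2} A^{p/4})^{1/p}`. -/
noncomputable def Matrix.kappa {n : Type*} [Fintype n] [DecidableEq n]
    (p : ℝ) (A B : Matrix n n ℂ) : Matrix n n ℂ :=
  (A.rpowCFC (p / 4) * B.rpowCFC (p / 2) * A.rpowCFC (p / 4)).rpowCFC p⁻¹

/-- `d_p(X, Y) := (Tr((X + Y)/2 − X κₚ Y))^{1/2}` (the trace inside is a nonnegative real). -/
noncomputable def Matrix.dp {n : Type*} [Fintype n] [DecidableEq n]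
    (p : ℝ) (X Y : Matrix n n ℂ) : ℝ :=
  Real.sqrt ((Matrix.trace ((2 : ℂ)⁻¹ • (X + Y) - Matrix.kappa p X Y)).re)

/-! For positive semidefinite `X`, `Y` every fractional power occurring in `κ_{1/2}` becomes a
polynomial once the arguments are eighth powers: `X⁸ κ_{1/2} Y⁸ = (X Y² X)²`. Hence
`d_{1/2}(X⁸, Y⁸)² = Tr((X⁸ + Y⁸)/2 - (X Y² X)²)` is a finite computation. For
`X = [[1, -1], [-1, 3]]`, `Y = [[3, -2], [-2, 2]]`, `Z = [[3, -1], [-1, 3]]` the squared distances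
are `d(X⁸, Y⁸)² = 136793/2`, `d(X⁸, Z⁸)² = 14416`, `d(Z⁸, Y⁸)² = 36473/2`, and
`√14416 + √(36473/2) ≤ 121 + 136 = 257 < √(136793/2)`. -/

namespace Matrix

section RCLike

variable {𝕜 : Type*} [RCLike 𝕜] {n : Type*} [Fintype n] [DecidableEq n]

theorem PosDef.pow {A : Matrix n n 𝕜} (hA : A.PosDef) (k : ℕ) : (A ^ k).PosDef :=
  (hA.posSemidef.pow k).posDef_iff_isUnit.mpr (hA.isUnit.pow k)

theorem IsHermitian.posDef_of_trace_pos_of_det_pos {A : Matrix (Fin 2) (Fin 2) 𝕜}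
    (hA : A.IsHermitian) (htr : 0 < A.trace) (hdet : 0 < A.det) : A.PosDef := by
  rw [hA.trace_eq_sum_eigenvalues, Fin.sum_univ_two, ← RCLike.ofReal_add,
    RCLike.ofReal_pos] at htr
  rw [hA.det_eq_prod_eigenvalues, Fin.prod_univ_two, ← RCLike.ofReal_mul,
    RCLike.ofReal_pos] at hdet
  rw [hA.posDef_iff_eigenvalues_pos]
  intro i
  fin_cases i
  · exact (pos_and_pos_or_neg_and_neg_of_mul_pos hdet).elim (·.1) fun h => by linarith
  · exact (pos_and_pos_or_neg_and_neg_of_mul_pos hdet).elim (·.2) fun h => by linarith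

end RCLike

open scoped MatrixOrder

variable {n : Type*} [Fintype n] [DecidableEq n]

theorem IsHermitian.rpowCFC_natCast {A : Matrix n n ℂ} (hA : A.IsHermitian) (k : ℕ) :
    A.rpowCFC k = A ^ k := by
  simp only [rpowCFC, Real.rpow_natCast]
  exact cfc_pow_id (R := ℝ) A k hA.isSelfAdjoint

theorem PosSemidef.rpowCFC_pow {A : Matrix n n ℂ} (hA : A.PosSemidef) (k : ℕ) (r : ℝ) :
    (A ^ k).rpowCFC r = A.rpowCFC (k * r) := by
  have hfin := A.finite_real_spectrum
  rw [rpowCFC, rpowCFC, ← cfc_pow_id (R := ℝ) A k hA.isHermitian.isSelfAdjoint,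
    ← cfc_comp' (fun x : ℝ => x ^ r) (fun x : ℝ => x ^ k) A ((hfin.image _).continuousOn _)
      (hfin.continuousOn _) hA.isHermitian.isSelfAdjoint]
  exact cfc_congr fun x hx =>
    (Real.rpow_natCast_mul (spectrum_nonneg_of_nonneg hA.nonneg hx) k r).symm

theorem PosSemidef.kappa_inv_natCast_pow {X Y : Matrix n n ℂ} (hX : X.PosSemidef)
    (hY : Y.PosSemidef) {k : ℕ} (hk : k ≠ 0) :
    kappa (k : ℝ)⁻¹ (X ^ (4 * k)) (Y ^ (4 * k)) = (X * Y ^ 2 * X) ^ k := by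
  have hXYX : (X * Y ^ 2 * X).IsHermitian := by
    simpa only [hX.isHermitian.eq] using ((hY.pow 2).mul_mul_conjTranspose_same X).isHermitian
  have hX1 : ((4 * k : ℕ) : ℝ) * ((k : ℝ)⁻¹ / 4) = (1 : ℕ) := by field_simp; push_cast; ring
  have hY2 : ((4 * k : ℕ) : ℝ) * ((k : ℝ)⁻¹ / 2) = (2 : ℕ) := by field_simp; push_cast; ring
  rw [kappa, hX.rpowCFC_pow, hY.rpowCFC_pow, hX1, hY2, inv_inv, hX.isHermitian.rpowCFC_natCast,
    hY.isHermitian.rpowCFC_natCast, pow_one, hXYX.rpowCFC_natCast]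

end Matrix

open Matrix

/-- The triangle inequality for `d_{1/2}` fails: there are positive definite `2×2` matrices
`A, B, C` with `d_{1/2}(A, B) > d_{1/2}(A, C) + d_{1/2}(C, B)`. -/
theorem exists_triangle_ineq_fails_d_half :
    ∃ A B C : Matrix (Fin 2) (Fin 2) ℂ, A.PosDef ∧ B.PosDef ∧ C.PosDef ∧
      Matrix.dp (1 / 2) A C + Matrix.dp (1 / 2) C B < Matrix.dp (1 / 2) A B := by
  let X : Matrix (Fin 2) (Fin 2) ℂ := !![1, -1; -1, 3]
  let Y : Matrix (Fin 2) (Fin 2) ℂ := !![3, -2; -2, 2]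
  let Z : Matrix (Fin 2) (Fin 2) ℂ := !![3, -1; -1, 3]
  obtain ⟨hX, hY, hZ⟩ : X.PosDef ∧ Y.PosDef ∧ Z.PosDef := by
    refine ⟨?_, ?_, ?_⟩ <;> refine IsHermitian.posDef_of_trace_pos_of_det_pos ?_ ?_ ?_ <;>
      first
      | ext i j; fin_cases i <;> fin_cases j <;> simp [X, Y, Z]
      | norm_num [X, Y, Z, trace_fin_two, det_fin_two]
  refine ⟨X ^ 8, Y ^ 8, Z ^ 8, hX.pow 8, hY.pow 8, hZ.pow 8, ?_⟩
  have hκ {U V : Matrix (Fin 2) (Fin 2) ℂ} (hU : U.PosDef) (hV : V.PosDef) :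
      kappa (1 / 2) (U ^ 8) (V ^ 8) = (U * V ^ 2 * U) ^ 2 := by
    simpa using hU.posSemidef.kappa_inv_natCast_pow hV.posSemidef two_ne_zero
  have hAC : dp (1 / 2) (X ^ 8) (Z ^ 8) = √14416 := by
    rw [dp, hκ hX hZ]
    norm_num [X, Z, pow_succ, mul_fin_two, trace_fin_two]
  have hCB : dp (1 / 2) (Z ^ 8) (Y ^ 8) = √(36473 / 2) := by
    rw [dp, hκ hZ hY]
    norm_num [Z, Y, pow_succ, mul_fin_two, trace_fin_two]
  have hAB : dp (1 / 2) (X ^ 8) (Y ^ 8) = √(136793 / 2) := by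
    rw [dp, hκ hX hY]
    norm_num [X, Y, pow_succ, mul_fin_two, trace_fin_two]
  rw [hAC, hCB, hAB]
  calc √14416 + √(36473 / 2)
      ≤ 121 + 136 := add_le_add (Real.sqrt_le_iff.2 ⟨by norm_num, by norm_num⟩)
        (Real.sqrt_le_iff.2 ⟨by norm_num, by norm_num⟩)
    _ < √(136793 / 2) := (Real.lt_sqrt (by norm_num)).2 (by norm_num)
end

section
/- Let A = [[4, 0], [0, 1]], B = [[5/2, 3/2], [3/2, 5/2]], and C = [[25/8, 3/4], [3/4, 13/8]], all positive definite 2×2 real symmetric matrices viewed in M₂(ℂ). Then d_{1/2}(A, B) > d_{1/2}(A, C) + d_{1/2}(C, B). -/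
open scoped ComplexOrder

abbrev M2 := Matrix (Fin 2) (Fin 2) ℂ

lemma contRpow {c : ℝ} (hc : 0 < c) : Continuous fun x : ℝ => x ^ c :=
  continuous_iff_continuousAt.2 fun x => Real.continuousAt_rpow_const x c (Or.inr hc.le)

lemma sa2 (a b d : ℝ) : IsSelfAdjoint (!![(a:ℂ), (b:ℂ); (b:ℂ), (d:ℂ)]) := by
  rw [IsSelfAdjoint, Matrix.star_eq_conjTranspose]
  ext i j
  fin_cases i <;> fin_cases j <;> simp [Matrix.conjTranspose_apply]

lemma spec2 {a b d : ℝ} (ha : 0 ≤ a) (hd : 0 ≤ d) (hdet : b * b ≤ a * d) :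
    spectrum ℝ (!![(a:ℂ), (b:ℂ); (b:ℂ), (d:ℂ)]) ⊆ Set.Ici 0 := by
  intro x hx
  by_contra hlt
  rw [Set.mem_Ici, not_le] at *
  rw [spectrum.mem_iff] at hx
  apply hx
  rw [Matrix.isUnit_iff_isUnit_det]
  have halg : algebraMap ℝ M2 x = Matrix.diagonal (fun _ => (x:ℂ)) := by
    ext i j
    simp [Matrix.algebraMap_eq_diagonal, Matrix.diagonal, Complex.coe_algebraMap]
  rw [halg]
  have : Matrix.diagonal (fun _ => (x:ℂ)) - !![(a:ℂ), b; b, d] =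
      !![((x - a : ℝ):ℂ), ((-b:ℝ):ℂ); ((-b:ℝ):ℂ), ((x - d:ℝ):ℂ)] := by
    ext i j
    fin_cases i <;> fin_cases j <;> simp [Matrix.diagonal] <;> push_cast <;> ring
  rw [this, Matrix.det_fin_two_of]
  rw [isUnit_iff_ne_zero]
  have key : (0:ℝ) < (x - a) * (x - d) - (-b) * (-b) := by nlinarith
  intro hcontra
  rw [← Complex.ofReal_mul, ← Complex.ofReal_mul, ← Complex.ofReal_sub,
    Complex.ofReal_eq_zero] at hcontra
  linarith [key, hcontra.ge]

lemma rpow_root {B : M2} (hB : IsSelfAdjoint B) (hs : spectrum ℝ B ⊆ Set.Ici 0)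
    {k : ℕ} (hk : 0 < k) : (B ^ k).rpowCFC ((k:ℝ))⁻¹ = B := by
  have hc : ContinuousOn (fun x : ℝ => x ^ ((k:ℝ))⁻¹) ((· ^ k) '' spectrum ℝ B) :=
    (contRpow (by positivity)).continuousOn
  unfold Matrix.rpowCFC
  rw [← cfc_comp_pow (fun x : ℝ => x ^ ((k:ℝ))⁻¹) k B hc hB]
  rw [cfc_congr (g := fun x : ℝ => x) ?_, cfc_id' ℝ B]
  intro x hx
  have h0 : (0:ℝ) ≤ x := hs hx
  simp only
  rw [← Real.rpow_natCast x k, ← Real.rpow_mul h0, mul_inv_cancel₀ (by positivity), Real.rpow_one]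

lemma rpow_eighth_sq {C : M2} (hC : IsSelfAdjoint C) (hs : spectrum ℝ C ⊆ Set.Ici 0) :
    C.rpowCFC (8:ℝ)⁻¹ * C.rpowCFC (8:ℝ)⁻¹ = C.rpowCFC (4:ℝ)⁻¹ := by
  unfold Matrix.rpowCFC
  rw [← cfc_mul _ _ C ((contRpow (by norm_num)).continuousOn) ((contRpow (by norm_num)).continuousOn)]
  refine cfc_congr fun x hx => ?_
  have h0 : (0:ℝ) ≤ x := hs hx
  rw [← Real.rpow_add' h0 (by norm_num : (8:ℝ)⁻¹ + (8:ℝ)⁻¹ ≠ 0)]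
  norm_num

lemma rpow_two_eq {W : M2} (hW : IsSelfAdjoint W) : W.rpowCFC ((1/2:ℝ))⁻¹ = W * W := by
  unfold Matrix.rpowCFC
  have : (fun x : ℝ => x ^ ((1/2:ℝ))⁻¹) = fun x : ℝ => x ^ (2:ℕ) := by
    funext x
    rw [show ((1/2:ℝ))⁻¹ = ((2:ℕ):ℝ) by norm_num, Real.rpow_natCast]
  rw [this, cfc_pow_id W 2 hW, pow_two]

noncomputable def s2 : ℝ := Real.sqrt 2
noncomputable def s8 : ℝ := Real.sqrt s2
noncomputable def su : ℝ := Real.sqrt (6 + s2)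
noncomputable def sv : ℝ := Real.sqrt (6 - s2)
noncomputable def s17 : ℝ := Real.sqrt 17

lemma s2_nonneg : 0 ≤ s2 := Real.sqrt_nonneg 2
lemma hs2 : s2 * s2 = 2 := Real.mul_self_sqrt (by norm_num)
lemma s2_lt_two : s2 < 2 := by nlinarith [hs2, s2_nonneg]
lemma s8_nonneg : 0 ≤ s8 := Real.sqrt_nonneg _
lemma hs8 : s8 * s8 = s2 := Real.mul_self_sqrt s2_nonneg
lemma su_nonneg : 0 ≤ su := Real.sqrt_nonneg _
lemma hsu : su * su = 6 + s2 := Real.mul_self_sqrt (by nlinarith [s2_nonneg])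
lemma sv_nonneg : 0 ≤ sv := Real.sqrt_nonneg _
lemma hsv : sv * sv = 6 - s2 := Real.mul_self_sqrt (by nlinarith [s2_lt_two])
lemma s17_nonneg : 0 ≤ s17 := Real.sqrt_nonneg _
lemma hs17 : s17 * s17 = 17 := Real.mul_self_sqrt (by norm_num)
lemma hsuv : su * sv = s2 * s17 := by
  rw [su, sv, ← Real.sqrt_mul (by nlinarith [s2_nonneg])]
  rw [show (6 + s2) * (6 - s2) = 34 by nlinarith [hs2]]
  rw [show (34:ℝ) = 2 * 17 by norm_num, Real.sqrt_mul (by norm_num), ← s2, ← s17]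

lemma hs2C : (s2:ℂ) * s2 = 2 := by exact_mod_cast congrArg (Complex.ofReal) hs2
lemma hs8C : (s8:ℂ) * s8 = (s2:ℂ) := by exact_mod_cast congrArg (Complex.ofReal) hs8
lemma hsuC : (su:ℂ) * su = 6 + (s2:ℂ) := by exact_mod_cast congrArg (Complex.ofReal) hsu
lemma hsvC : (sv:ℂ) * sv = 6 - (s2:ℂ) := by exact_mod_cast congrArg (Complex.ofReal) hsv
lemma hsuvC : (su:ℂ) * sv = (s2:ℂ) * s17 := by exact_mod_cast congrArg (Complex.ofReal) hsuv
lemma hs17C : (s17:ℂ) * s17 = 17 := by exact_mod_cast congrArg (Complex.ofReal) hs17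

noncomputable def A8 : M2 := !![((s8:ℝ):ℂ), ((0:ℝ):ℂ); ((0:ℝ):ℂ), ((1:ℝ):ℂ)]
noncomputable def B4 : M2 :=
  !![(((s2+1)/2:ℝ):ℂ), (((s2-1)/2:ℝ):ℂ); (((s2-1)/2:ℝ):ℂ), (((s2+1)/2:ℝ):ℂ)]
noncomputable def c11 : ℝ := ((s2+2)*su + (2-s2)*sv)/8
noncomputable def c12 : ℝ := s2*(su-sv)/8
noncomputable def c22 : ℝ := ((2-s2)*su + (2+s2)*sv)/8
noncomputable def C4 : M2 := !![((c11:ℝ):ℂ), ((c12:ℝ):ℂ); ((c12:ℝ):ℂ), ((c22:ℝ):ℂ)]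

lemma hA8pow : A8 ^ 8 = !![4, 0; 0, 1] := by
  have h8 : A8 ^ 8 = ((A8 ^ 2) ^ 2) ^ 2 := by rw [← pow_mul, ← pow_mul]
  have hsq : A8 * A8 = !![((s2:ℝ):ℂ), ((0:ℝ):ℂ); ((0:ℝ):ℂ), ((1:ℝ):ℂ)] := by
    rw [A8]
    ext i j
    fin_cases i <;> fin_cases j <;>
      simp [Matrix.mul_fin_two] <;> push_cast <;> linear_combination hs8C
  have hsq2 : (!![((s2:ℝ):ℂ), ((0:ℝ):ℂ); ((0:ℝ):ℂ), ((1:ℝ):ℂ)] : M2) *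
      !![((s2:ℝ):ℂ), ((0:ℝ):ℂ); ((0:ℝ):ℂ), ((1:ℝ):ℂ)] = !![2, 0; 0, 1] := by
    ext i j
    fin_cases i <;> fin_cases j <;>
      simp [Matrix.mul_fin_two] <;> push_cast <;> linear_combination hs2C
  have e1 : A8 ^ 2 = !![((s2:ℝ):ℂ), ((0:ℝ):ℂ); ((0:ℝ):ℂ), ((1:ℝ):ℂ)] := by rw [pow_two, hsq]
  have e2 : (!![((s2:ℝ):ℂ), ((0:ℝ):ℂ); ((0:ℝ):ℂ), ((1:ℝ):ℂ)] : M2) ^ 2 = !![2, 0; 0, 1] := by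
    rw [pow_two, hsq2]
  rw [h8, e1, e2, pow_two]
  ext i j
  fin_cases i <;> fin_cases j <;> simp [Matrix.mul_fin_two] <;> norm_num

noncomputable def Bh : M2 :=
  !![(((3:ℝ)/2:ℝ):ℂ), (((1:ℝ)/2:ℝ):ℂ); (((1:ℝ)/2:ℝ):ℂ), (((3:ℝ)/2:ℝ):ℂ)]

lemma hB4sq : B4 * B4 = Bh := by
  rw [B4, Bh]
  ext i j
  fin_cases i <;> fin_cases j <;>
    simp [Matrix.mul_fin_two] <;> push_cast <;> linear_combination hs2C/2

lemma hB4pow : B4 ^ 4 = !![5/2, 3/2; 3/2, 5/2] := by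
  have h4 : B4 ^ 4 = (B4 ^ 2) ^ 2 := by rw [← pow_mul]
  have e1 : B4 ^ 2 = Bh := by rw [pow_two]; exact hB4sq
  rw [h4, e1, pow_two, Bh]
  ext i j
  fin_cases i <;> fin_cases j <;> simp [Matrix.mul_fin_two] <;> push_cast <;> norm_num

noncomputable def C2 : M2 :=
  !![(((7:ℝ)/4:ℝ):ℂ), (((1:ℝ)/4:ℝ):ℂ); (((1:ℝ)/4:ℝ):ℂ), (((5:ℝ)/4:ℝ):ℂ)]

lemma hC4sq : C4 * C4 = C2 := by
  rw [C4, C2]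
  ext i j
  fin_cases i <;> fin_cases j
  · simp [Matrix.mul_fin_two, c11, c12, c22]
    push_cast
    linear_combination ((1/8) + (-1/16)*(s2:ℂ)*s2) * hsuvC + ((1/16) + (1/16)*(s2:ℂ) + (1/32)*(s2:ℂ)*s2) * hsuC + ((1/16) + (-1/16)*(s2:ℂ) + (1/32)*(s2:ℂ)*s2) * hsvC + ((1/2) + (-1/16)*(s2:ℂ)*s17) * hs2C
  · simp [Matrix.mul_fin_two, c11, c12, c22]
    push_cast
    linear_combination ((1/16)*(s2:ℂ)) * hsuC + ((-1/16)*(s2:ℂ)) * hsvC + ((1/8)) * hs2C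
  · simp [Matrix.mul_fin_two, c11, c12, c22]
    push_cast
    linear_combination ((1/16)*(s2:ℂ)) * hsuC + ((-1/16)*(s2:ℂ)) * hsvC + ((1/8)) * hs2C
  · simp [Matrix.mul_fin_two, c11, c12, c22]
    push_cast
    linear_combination ((1/8) + (-1/16)*(s2:ℂ)*s2) * hsuvC + ((1/16) + (-1/16)*(s2:ℂ) + (1/32)*(s2:ℂ)*s2) * hsuC + ((1/16) + (1/16)*(s2:ℂ) + (1/32)*(s2:ℂ)*s2) * hsvC + ((1/4) + (-1/16)*(s2:ℂ)*s17) * hs2C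

lemma hC4pow : C4 ^ 4 = !![25/8, 3/4; 3/4, 13/8] := by
  have h4 : C4 ^ 4 = (C4 ^ 2) ^ 2 := by rw [← pow_mul]
  have e1 : C4 ^ 2 = C2 := by rw [pow_two]; exact hC4sq
  rw [h4, e1, pow_two, C2]
  ext i j
  fin_cases i <;> fin_cases j <;> simp [Matrix.mul_fin_two] <;> push_cast <;> norm_num

lemma saA8 : IsSelfAdjoint A8 := by rw [A8]; exact sa2 _ _ _
lemma saB4 : IsSelfAdjoint B4 := by rw [B4]; exact sa2 _ _ _
lemma saC4 : IsSelfAdjoint C4 := by rw [C4]; exact sa2 _ _ _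
lemma specA8 : spectrum ℝ A8 ⊆ Set.Ici 0 := by
  rw [A8]; exact spec2 s8_nonneg (by norm_num) (by nlinarith [s8_nonneg])
lemma specB4 : spectrum ℝ B4 ⊆ Set.Ici 0 := by
  rw [B4]; exact spec2 (by nlinarith [s2_nonneg]) (by nlinarith [s2_nonneg])
    (by nlinarith [s2_nonneg])
lemma hdetC4 : c11 * c22 - c12 * c12 = s2 * s17 / 4 := by
  rw [c11, c12, c22]
  linear_combination ((1/8) + (1/16)*s2*s2) * hsuv + ((1/16) + (-1/32)*s2*s2) * hsu + ((1/16) + (-1/32)*s2*s2) * hsv + ((-3/8) + (1/16)*s2*s17) * hs2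
lemma c11_nonneg : 0 ≤ c11 := by
  rw [c11]
  have h1 : 0 ≤ (s2+2)*su := mul_nonneg (by linarith [s2_nonneg]) su_nonneg
  have h2 : 0 ≤ (2-s2)*sv := mul_nonneg (by linarith [s2_lt_two]) sv_nonneg
  linarith
lemma c22_nonneg : 0 ≤ c22 := by
  rw [c22]
  have h1 : 0 ≤ (2-s2)*su := mul_nonneg (by linarith [s2_lt_two]) su_nonneg
  have h2 : 0 ≤ (2+s2)*sv := mul_nonneg (by linarith [s2_nonneg]) sv_nonneg
  linarith
lemma specC4 : spectrum ℝ C4 ⊆ Set.Ici 0 := by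
  rw [C4]
  exact spec2 c11_nonneg c22_nonneg
    (by nlinarith [hdetC4, mul_nonneg s2_nonneg s17_nonneg])

lemma castC : (!![25/8, 3/4; 3/4, 13/8] : M2) =
    !![(((25:ℝ)/8:ℝ):ℂ), (((3:ℝ)/4:ℝ):ℂ); (((3:ℝ)/4:ℝ):ℂ), (((13:ℝ)/8:ℝ):ℂ)] := by
  norm_num
lemma saC : IsSelfAdjoint (!![25/8, 3/4; 3/4, 13/8] : M2) := by rw [castC]; exact sa2 _ _ _
lemma specC : spectrum ℝ (!![25/8, 3/4; 3/4, 13/8] : M2) ⊆ Set.Ici 0 := by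
  rw [castC]; exact spec2 (by norm_num) (by norm_num) (by norm_num)

lemma sa_sandwich {S P : M2} (hS : IsSelfAdjoint S) (hP : IsSelfAdjoint P) :
    IsSelfAdjoint (S * P * S) := by
  rw [IsSelfAdjoint] at *
  simp [star_mul, mul_assoc, hS, hP]

noncomputable def sACval : ℝ := (20 - 12*s2 + 4*s17 - 3*(s2*s17))/16
noncomputable def tABval : ℝ := (19 - 12*s2)/4

lemma traceAB :
    Matrix.trace ((2:ℂ)⁻¹ • ((!![4, 0; 0, 1] : M2) + !![5/2, 3/2; 3/2, 5/2]))
      - Matrix.trace ((A8 * B4 * A8) * (A8 * B4 * A8)) = ((tABval : ℝ) : ℂ) := by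
  rw [A8, B4, tABval]
  simp [Matrix.mul_fin_two, Matrix.trace_fin_two, Matrix.smul_apply, Matrix.add_apply,
    smul_eq_mul]
  push_cast
  linear_combination ((-1/2) + (-1/4)*(s8:ℂ)*(s8:ℂ) + (3/4)*(s2:ℂ) + (-1/2)*(s2:ℂ)*(s8:ℂ)*(s8:ℂ) + -1*(s2:ℂ)*(s2:ℂ) + (-1/4)*(s2:ℂ)*(s2:ℂ)*(s8:ℂ)*(s8:ℂ) + (-1/4)*(s2:ℂ)*(s2:ℂ)*(s2:ℂ)) * hs8C + (-1*(s2:ℂ) + (-1/4)*(s2:ℂ)*(s2:ℂ)) * hs2C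

lemma traceAC :
    Matrix.trace ((2:ℂ)⁻¹ • ((!![4, 0; 0, 1] : M2) + !![25/8, 3/4; 3/4, 13/8]))
      - Matrix.trace ((A8 * C4 * A8) * (A8 * C4 * A8)) = ((sACval : ℝ) : ℂ) := by
  rw [A8, C4, sACval, c11, c12, c22]
  simp [Matrix.mul_fin_two, Matrix.trace_fin_two, Matrix.smul_apply, Matrix.add_apply,
    smul_eq_mul]
  push_cast
  linear_combination ((-1/16)*(s8:ℂ)*(s8:ℂ)*(sv:ℂ)*(sv:ℂ) + (-1/8)*(s8:ℂ)*(s8:ℂ)*(su:ℂ)*(sv:ℂ) + (-1/16)*(s8:ℂ)*(s8:ℂ)*(su:ℂ)*(su:ℂ) + (-1/16)*(s2:ℂ)*(sv:ℂ)*(sv:ℂ) + (-1/8)*(s2:ℂ)*(su:ℂ)*(sv:ℂ) + (-1/16)*(s2:ℂ)*(su:ℂ)*(su:ℂ) + (1/16)*(s2:ℂ)*(s8:ℂ)*(s8:ℂ)*(sv:ℂ)*(sv:ℂ) + (-1/16)*(s2:ℂ)*(s8:ℂ)*(s8:ℂ)*(su:ℂ)*(su:ℂ) + (1/32)*(s2:ℂ)*(s2:ℂ)*(sv:ℂ)*(sv:ℂ)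 + (1/16)*(s2:ℂ)*(s2:ℂ)*(su:ℂ)*(sv:ℂ) + (-3/32)*(s2:ℂ)*(s2:ℂ)*(su:ℂ)*(su:ℂ) + (-1/64)*(s2:ℂ)*(s2:ℂ)*(s8:ℂ)*(s8:ℂ)*(sv:ℂ)*(sv:ℂ) + (1/32)*(s2:ℂ)*(s2:ℂ)*(s8:ℂ)*(s8:ℂ)*(su:ℂ)*(sv:ℂ) + (-1/64)*(s2:ℂ)*(s2:ℂ)*(s8:ℂ)*(s8:ℂ)*(su:ℂ)*(su:ℂ) + (-1/64)*(s2:ℂ)*(s2:ℂ)*(s2:ℂ)*(sv:ℂ)*(sv:ℂ) + (1/32)*(s2:ℂ)*(s2:ℂ)*(s2:ℂ)*(su:ℂ)*(sv:ℂ) + (-1/64)*(s2:ℂ)*(s2:ℂ)*(s2:ℂ)*(su:ℂ)*(su:ℂ)) * hs8C + ((-1/8) + (-3/32)*(s2:ℂ)*(s2:ℂ) + (1/16)*(s2:ℂ)*(s2:ℂ)*(s2:ℂ) + (1/32)*(s2:ℂ)*(s2:ℂ)*(s2:ℂ)*(s2:ℂ)) * hsuvC + ((-1/16) + (1/16)*(s2:ℂ)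 + (-5/64)*(s2:ℂ)*(s2:ℂ) + (-3/32)*(s2:ℂ)*(s2:ℂ)*(s2:ℂ) + (-1/64)*(s2:ℂ)*(s2:ℂ)*(s2:ℂ)*(s2:ℂ)) * hsuC + ((-1/16) + (-1/16)*(s2:ℂ) + (-5/64)*(s2:ℂ)*(s2:ℂ) + (1/32)*(s2:ℂ)*(s2:ℂ)*(s2:ℂ) + (-1/64)*(s2:ℂ)*(s2:ℂ)*(s2:ℂ)*(s2:ℂ)) * hsvC + ((-23/16) + (1/8)*(s17:ℂ) + (-3/8)*(s2:ℂ) + (-1/32)*(s2:ℂ)*(s17:ℂ) + (-5/16)*(s2:ℂ)*(s2:ℂ) + (1/16)*(s2:ℂ)*(s2:ℂ)*(s17:ℂ) + (1/32)*(s2:ℂ)*(s2:ℂ)*(s2:ℂ)*(s17:ℂ)) * hs2C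

lemma traceCB :
    Matrix.trace ((2:ℂ)⁻¹ • ((!![25/8, 3/4; 3/4, 13/8] : M2) + !![5/2, 3/2; 3/2, 5/2]))
      - Matrix.trace ((B4 * C4) * (B4 * C4)) = ((sACval : ℝ) : ℂ) := by
  rw [B4, C4, sACval, c11, c12, c22]
  simp [Matrix.mul_fin_two, Matrix.trace_fin_two, Matrix.smul_apply, Matrix.add_apply,
    smul_eq_mul]
  push_cast
  linear_combination ((-1/8) + (-3/32)*(s2:ℂ)*(s2:ℂ) + (1/16)*(s2:ℂ)*(s2:ℂ)*(s2:ℂ) + (1/32)*(s2:ℂ)*(s2:ℂ)*(s2:ℂ)*(s2:ℂ)) * hsuvC + ((-1/16) + (1/16)*(s2:ℂ) + (-5/64)*(s2:ℂ)*(s2:ℂ) + (-3/32)*(s2:ℂ)*(s2:ℂ)*(s2:ℂ) + (-1/64)*(s2:ℂ)*(s2:ℂ)*(s2:ℂ)*(s2:ℂ)) * hsuC + ((-1/16) + (-1/16)*(s2:ℂ) + (-5/64)*(s2:ℂ)*(s2:ℂ) + (1/32)*(s2:ℂ)*(s2:ℂ)*(s2:ℂ) + (-1/64)*(s2:ℂ)*(s2:ℂ)*(s2:ℂ)*(s2:ℂ))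 * hsvC + ((-23/16) + (1/8)*(s17:ℂ) + (-3/8)*(s2:ℂ) + (-1/32)*(s2:ℂ)*(s17:ℂ) + (-5/16)*(s2:ℂ)*(s2:ℂ) + (1/16)*(s2:ℂ)*(s2:ℂ)*(s17:ℂ) + (1/32)*(s2:ℂ)*(s2:ℂ)*(s2:ℂ)*(s17:ℂ)) * hs2C

/-- For the explicit matrices `A, B, C` below, the triangle inequality for `d_{1/2}` fails:
`d_{1/2}(A, B) > d_{1/2}(A, C) + d_{1/2}(C, B)`. -/
theorem triangle_ineq_fails_d_half_explicit :
    Matrix.dp (1 / 2) (!![4, 0; 0, 1] : Matrix (Fin 2) (Fin 2) ℂ) !![25/8, 3/4; 3/4, 13/8] +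
        Matrix.dp (1 / 2) (!![25/8, 3/4; 3/4, 13/8] : Matrix (Fin 2) (Fin 2) ℂ)
          !![5/2, 3/2; 3/2, 5/2] <
      Matrix.dp (1 / 2) (!![4, 0; 0, 1] : Matrix (Fin 2) (Fin 2) ℂ) !![5/2, 3/2; 3/2, 5/2] := by
  have hexp8 : (1/2/4 : ℝ) = ((8:ℕ):ℝ)⁻¹ := by norm_num
  have hexp4 : (1/2/2 : ℝ) = ((4:ℕ):ℝ)⁻¹ := by norm_num
  have hA8 : (!![4, 0; 0, 1] : M2).rpowCFC (1/2/4) = A8 := by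
    rw [hexp8, ← hA8pow]; exact rpow_root saA8 specA8 (by norm_num)
  have hB4 : (!![5/2, 3/2; 3/2, 5/2] : M2).rpowCFC (1/2/2) = B4 := by
    rw [hexp4, ← hB4pow]; exact rpow_root saB4 specB4 (by norm_num)
  have hC4 : (!![25/8, 3/4; 3/4, 13/8] : M2).rpowCFC (1/2/2) = C4 := by
    rw [hexp4, ← hC4pow]; exact rpow_root saC4 specC4 (by norm_num)
  set C8 : M2 := (!![25/8, 3/4; 3/4, 13/8] : M2).rpowCFC (1/2/4) with hC8def
  have saC8 : IsSelfAdjoint C8 := by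
    rw [hC8def]; unfold Matrix.rpowCFC; exact cfc_predicate _ _
  have hC8sq : C8 * C8 = C4 := by
    rw [hC8def, show (1/2/4:ℝ) = (8:ℝ)⁻¹ by norm_num,
      rpow_eighth_sq saC specC, show ((4:ℝ))⁻¹ = (1/2/2:ℝ) by norm_num, hC4]
  have kAB : Matrix.kappa (1/2) (!![4, 0; 0, 1]) (!![5/2, 3/2; 3/2, 5/2])
      = (A8 * B4 * A8) * (A8 * B4 * A8) := by
    unfold Matrix.kappa
    rw [hA8, hB4, rpow_two_eq (sa_sandwich saA8 saB4)]
  have kAC : Matrix.kappa (1/2) (!![4, 0; 0, 1]) (!![25/8, 3/4; 3/4, 13/8])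
      = (A8 * C4 * A8) * (A8 * C4 * A8) := by
    unfold Matrix.kappa
    rw [hA8, hC4, rpow_two_eq (sa_sandwich saA8 saC4)]
  have kCB : Matrix.kappa (1/2) (!![25/8, 3/4; 3/4, 13/8]) (!![5/2, 3/2; 3/2, 5/2])
      = (C8 * B4 * C8) * (C8 * B4 * C8) := by
    unfold Matrix.kappa
    rw [hB4, rpow_two_eq (sa_sandwich saC8 saB4)]
  have htrCB : Matrix.trace ((C8 * B4 * C8) * (C8 * B4 * C8))
      = Matrix.trace ((B4 * C4) * (B4 * C4)) := by
    have e1 : (C8 * B4 * C8) * (C8 * B4 * C8) = C8 * (B4 * (C4 * (B4 * C8))) := by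
      rw [← hC8sq]; noncomm_ring
    have e2 : (B4 * (C4 * (B4 * C8))) * C8 = (B4 * C4) * (B4 * C4) := by
      rw [← hC8sq]; noncomm_ring
    rw [e1, Matrix.trace_mul_comm, e2]
  unfold Matrix.dp
  rw [kAB, kAC, kCB]
  simp only [Matrix.trace_sub]
  rw [htrCB, traceAB, traceAC, traceCB]
  simp only [Complex.ofReal_re]
  -- numeric part
  have hb2l : (1.414213:ℝ) ≤ s2 := by nlinarith [hs2, s2_nonneg]
  have hb2u : s2 ≤ 1.4142136 := by nlinarith [hs2, s2_nonneg]
  have hb17l : (4.123105:ℝ) ≤ s17 := by nlinarith [hs17, s17_nonneg]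
  have hwsq : (s2*s17)*(s2*s17) = 34 := by nlinarith [hs2, hs17]
  have hwn : (0:ℝ) ≤ s2*s17 := mul_nonneg s2_nonneg s17_nonneg
  have hbwu : s2*s17 ≤ 5.8309519 := by nlinarith [hwsq, hwn]
  have hb17u : s17 ≤ 4.1231057 := by nlinarith [hs17, s17_nonneg]
  have h0 : (0:ℝ) ≤ sACval := by
    rw [sACval]; nlinarith [hb2u, hb17l, hbwu]
  have h4 : 4 * sACval < tABval := by
    rw [sACval, tABval]
    nlinarith [mul_nonneg (sub_nonneg.2 hb2l) (sub_nonneg.2 hb17l), hb2l, hb17l]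
  have hsplit : Real.sqrt (4*sACval) = Real.sqrt sACval + Real.sqrt sACval := by
    rw [show (4:ℝ)*sACval = (2:ℝ)^2 * sACval by ring, Real.sqrt_mul (by positivity),
      Real.sqrt_sq (by norm_num)]
    ring
  have final := Real.sqrt_lt_sqrt (by linarith : (0:ℝ) ≤ 4*sACval) h4
  rw [hsplit] at final
  exact final
end

section
/- Let A = [[4, 0], [0, 1]], B = [[5/2, 3/2], [3/2, 5/2]], and C = [[25/8, 3/4], [3/4, 13/8]], viewed as positive definite matrices in M₂(ℂ). Then d_{1/2}(B, C) = d_{1/2}(A, C). -/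
/-!
The reflection `R = 2^{-1/2} [[1, 1], [1, -1]]` is a unitary commuting with `C` (which lies in the
span of `1` and `[[1, 1], [1, -1]]`) and conjugating `A` to `B`. Since the continuous functional
calculus commutes with ⋆-automorphisms, `d_p` is invariant under simultaneous unitary conjugation,
so `d_p(B, C) = d_p(R A R*, R C R*) = d_p(A, C)`.
-/

open scoped ComplexOrder

section
variable {A B : Type*} [Ring A] [StarRing A] [TopologicalSpace A] [Algebra ℝ A]
  [ContinuousFunctionalCalculus ℝ A IsSelfAdjoint]
  [Ring B] [StarRing B] [TopologicalSpace B] [Algebra ℝ B]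
  [ContinuousFunctionalCalculus ℝ B IsSelfAdjoint] [ContinuousMap.UniqueHom ℝ B]

/-- When `a` is not self-adjoint or `f` is discontinuous on its spectrum, both sides are the junk
value `0`, since `φ` preserves spectra and self-adjointness. -/
theorem StarAlgEquiv.map_cfc (φ : A ≃⋆ₐ[ℝ] B) (hφ : Continuous φ) (f : ℝ → ℝ) (a : A) :
    φ (cfc f a) = cfc f (φ a) := by
  by_cases ha : IsSelfAdjoint a
  · by_cases hf : ContinuousOn f (spectrum ℝ a)
    · exact StarAlgHomClass.map_cfc (S := ℝ) φ f a hf hφ ha (ha.map φ)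
    · rw [cfc_apply_of_not_continuousOn a hf, map_zero,
        cfc_apply_of_not_continuousOn _ (by rwa [AlgEquiv.spectrum_eq])]
  · have hφa : ¬ IsSelfAdjoint (φ a) := fun h ↦ ha (by simpa using h.map φ.symm)
    rw [cfc_apply_of_not_predicate a ha, map_zero, cfc_apply_of_not_predicate _ hφa]

end

namespace Matrix
variable {n : Type*} [Fintype n] [DecidableEq n]

lemma rpowCFC_map (φ : Matrix n n ℂ ≃⋆ₐ[ℝ] Matrix n n ℂ) (A : Matrix n n ℂ) (r : ℝ) :
    (φ A).rpowCFC r = φ (A.rpowCFC r) :=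
  (φ.map_cfc (LinearMap.continuous_of_finiteDimensional φ.toAlgEquiv.toLinearMap) _ A).symm

lemma kappa_map (φ : Matrix n n ℂ ≃⋆ₐ[ℝ] Matrix n n ℂ) (p : ℝ) (A B : Matrix n n ℂ) :
    kappa p (φ A) (φ B) = φ (kappa p A B) := by
  simp only [kappa, rpowCFC_map, ← map_mul]

lemma dp_unitary_conj {U : Matrix n n ℂ} (hU : U ∈ unitaryGroup n ℂ) (p : ℝ)
    (X Y : Matrix n n ℂ) :
    dp p (U * X * star U) (U * Y * star U) = dp p X Y := by
  have hκ : kappa p (U * X * star U) (U * Y * star U) = U * kappa p X Y * star U :=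
    kappa_map (Unitary.conjStarAlgAut ℝ _ ⟨U, hU⟩) p X Y
  have hconj : (2 : ℂ)⁻¹ • (U * X * star U + U * Y * star U) - U * kappa p X Y * star U =
      U * ((2 : ℂ)⁻¹ • (X + Y) - kappa p X Y) * star U := by
    simp only [Matrix.mul_add, Matrix.add_mul, Matrix.mul_sub, Matrix.sub_mul, Matrix.mul_smul,
      Matrix.smul_mul]
  rw [dp, dp, hκ, hconj, trace_mul_cycle, Unitary.star_mul_self_of_mem hU, Matrix.one_mul]

end Matrix

/-- `d_{1/2}(B, C) = d_{1/2}(A, C)` for the explicit matrices `A, B, C`. -/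
theorem d_half_BC_eq_d_half_AC :
    Matrix.dp (1 / 2) (!![5/2, 3/2; 3/2, 5/2] : Matrix (Fin 2) (Fin 2) ℂ)
        !![25/8, 3/4; 3/4, 13/8] =
      Matrix.dp (1 / 2) (!![4, 0; 0, 1] : Matrix (Fin 2) (Fin 2) ℂ)
        !![25/8, 3/4; 3/4, 13/8] := by
  obtain ⟨s, hs⟩ : ∃ s : ℝ, s ^ 2 = 2⁻¹ := ⟨√2⁻¹, Real.sq_sqrt (by norm_num)⟩
  set N : Matrix (Fin 2) (Fin 2) ℂ := !![1, 1; 1, -1]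
  set R := (s : ℂ) • N
  have hconj (M : Matrix (Fin 2) (Fin 2) ℂ) : R * M * star R = (2⁻¹ : ℂ) • (N * M * N) := by
    have hN : star N = N := by ext i j; fin_cases i <;> fin_cases j <;> simp [N]
    have hsC : (s : ℂ) * s = 2⁻¹ := by
      rw [← Complex.ofReal_mul, ← sq, hs, Complex.ofReal_inv, Complex.ofReal_ofNat]
    simp only [R, star_smul, Complex.star_def, Complex.conj_ofReal, hN, Matrix.smul_mul,
      Matrix.mul_smul, smul_smul, hsC]
  have hR : R ∈ Matrix.unitaryGroup (Fin 2) ℂ := by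
    rw [Matrix.mem_unitaryGroup_iff]
    nth_rewrite 1 [← Matrix.mul_one R]
    rw [hconj, Matrix.mul_one, Matrix.one_fin_two]
    norm_num [N, Matrix.mul_fin_two]
  have hA : R * !![4, 0; 0, 1] * star R = !![5/2, 3/2; 3/2, 5/2] := by
    rw [hconj]; norm_num [N, Matrix.mul_fin_two]
  have hC : R * !![25/8, 3/4; 3/4, 13/8] * star R = !![25/8, 3/4; 3/4, 13/8] := by
    rw [hconj]; norm_num [N, Matrix.mul_fin_two]
  have h := Matrix.dp_unitary_conj hR (1 / 2) !![4, 0; 0, 1] !![25/8, 3/4; 3/4, 13/8]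
  rwa [hA, hC] at h
end
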